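/- (Theorem 1 of the paper.) Consider the system M^μ_{AB} ∂_μ φ^B = -Ξ_{AB} φ^B on ℝ^{1+3} with constant matrices and M^0 invertible. Suppose there exist constant symmetric matrices E^μ_{AB} and σ_{AB} such that ∂_μ(½E^μ_{AB}φ^Aφ^B) = -σ_{AB}φ^Aφ^B holds along every smooth solution, and E^μ_{AB}Z^AZ^B is future-directed timelike for every nonzero Z ∈ ℝ^D. Then every smooth solution of the original system also satisfies the symmetric hyperbolic system E^μ_{AB} ∂_μ φ^B = -σ_{AB} φ^B - Ξ'_{[AB]} φ^B, where Ξ'_{[AB]} is the antisymmetric part of Ξ' = N Ξ with N = E^0 (M^0)^{-1}, and in this system the principal matrices E^μ_{AB} are symmetric with E^0_{AB} positive definite. -/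

import Mathlib

open Matrix NormedSpace

/-- Partial derivative `∂_μ f` on `ℝ^{1+3}` (coordinate `0` is time). -/
noncomputable def pd (μ : Fin 4) (f : (Fin 4 → ℝ) → ℝ) (x : Fin 4 → ℝ) : ℝ :=
  fderiv ℝ f x (Pi.single μ 1)

/-- The quadratic form `Z^A M_{AB} Z^B`. -/
def quadM {D : ℕ} (M : Matrix (Fin D) (Fin D) ℝ) (Z : Fin D → ℝ) : ℝ :=
  Z ⬝ᵥ M.mulVec Z

lemma quad_anti {D : ℕ} {Q : Matrix (Fin D) (Fin D) ℝ}
    (h : ∀ v : Fin D → ℝ, v ⬝ᵥ Q.mulVec v = 0) (A B : Fin D) : Q A B + Q B A = 0 := by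
  have hd : ∀ v w : Fin D → ℝ, v ⬝ᵥ Q.mulVec w + w ⬝ᵥ Q.mulVec v = 0 := by
    intro v w
    have := h (v + w)
    simp only [Matrix.mulVec_add, dotProduct_add, add_dotProduct, h v, h w] at this
    linarith
  have := hd (Pi.single A 1) (Pi.single B 1)
  simpa [Matrix.mulVec_single] using this

lemma bilin_zero {D : ℕ} {C : Matrix (Fin D) (Fin D) ℝ}
    (h : ∀ v w : Fin D → ℝ, v ⬝ᵥ C.mulVec w = 0) : C = 0 := by
  ext A B
  have := h (Pi.single A 1) (Pi.single B 1)
  simpa [Matrix.mulVec_single] using this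

lemma dot_sum {D : ℕ} (v : Fin D → ℝ) (g : Fin 3 → Fin D → ℝ) :
    v ⬝ᵥ (∑ j : Fin 3, g j) = ∑ j : Fin 3, v ⬝ᵥ g j := by
  simp only [dotProduct, Finset.sum_apply, Finset.mul_sum]
  exact Finset.sum_comm

lemma mulVec_sum' {D : ℕ} (P : Matrix (Fin D) (Fin D) ℝ) (g : Fin 3 → Fin D → ℝ) :
    P *ᵥ (∑ j : Fin 3, g j) = ∑ j : Fin 3, P *ᵥ g j := by
  funext A
  simp only [Matrix.mulVec, dotProduct, Finset.sum_apply, Finset.mul_sum]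
  exact Finset.sum_comm

lemma dot_double {D : ℕ} (P : Matrix (Fin D) (Fin D) ℝ) (a z : Fin D → ℝ) :
    ∑ A : Fin D, ∑ B : Fin D, P A B * a A * z B = a ⬝ᵥ P.mulVec z := by
  simp only [dotProduct, Matrix.mulVec, Finset.mul_sum]
  exact Finset.sum_congr rfl fun A _ => Finset.sum_congr rfl fun B _ => by ring

lemma quad_expand {D : ℕ} (S : Matrix (Fin D) (Fin D) ℝ) (Z : Fin D → ℝ) :
    (1/2 : ℝ) * quadM S Z = ∑ A : Fin D, ∑ B : Fin D, ((1/2 * S A B : ℝ) * (Z A * Z B)) := by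
  simp only [quadM, dotProduct, Matrix.mulVec, Finset.mul_sum]
  refine Finset.sum_congr rfl fun A _ => Finset.sum_congr rfl fun B _ => by ring

lemma pd_quad {D : ℕ} {S : Matrix (Fin D) (Fin D) ℝ} (hS : S.IsSymm)
    (φ : (Fin 4 → ℝ) → Fin D → ℝ) (hφ : ContDiff ℝ (⊤ : ℕ∞) φ) (μ : Fin 4) (x : Fin 4 → ℝ) :
    pd μ (fun y => (1 / 2 : ℝ) * quadM S (φ y)) x =
      ∑ A : Fin D, ∑ B : Fin D, S A B * φ x A * pd μ (fun y => φ y B) x := by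
  have hdiff : ∀ B : Fin D, DifferentiableAt ℝ (fun y => φ y B) x :=
    fun B => (((contDiff_pi.mp hφ B)).differentiable (by simp)).differentiableAt
  have hq : HasFDerivAt (fun y => (1 / 2 : ℝ) * quadM S (φ y))
      (∑ A : Fin D, ∑ B : Fin D,
        (((1/2 * S A B : ℝ) * φ x A) • fderiv ℝ (fun y => φ y B) x
          + ((1/2 * S A B : ℝ) * φ x B) • fderiv ℝ (fun y => φ y A) x)) x := by
    have heq : (fun y => (1 / 2 : ℝ) * quadM S (φ y)) =
        (fun y => ∑ A : Fin D, ∑ B : Fin D, ((1/2 * S A B : ℝ) * (φ y A * φ y B))) := by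
      funext y; exact quad_expand S (φ y)
    rw [heq]
    refine HasFDerivAt.fun_sum fun A _ => HasFDerivAt.fun_sum fun B _ => ?_
    have := (((hdiff A).hasFDerivAt.fun_mul (hdiff B).hasFDerivAt)).const_mul (1/2 * S A B : ℝ)
    refine this.congr_fderiv ?_
    ext k
    simp only [ContinuousLinearMap.add_apply, ContinuousLinearMap.coe_smul', Pi.smul_apply,
      smul_eq_mul, ContinuousLinearMap.smul_apply]
    ring
  rw [pd, hq.fderiv]
  simp only [ContinuousLinearMap.coe_sum', Finset.sum_apply, ContinuousLinearMap.add_apply,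
    ContinuousLinearMap.coe_smul', Pi.smul_apply, smul_eq_mul]
  have hsymm : ∀ A B : Fin D, S B A = S A B := fun A B => (congrFun (congrFun hS B) A).symm
  calc ∑ A : Fin D, ∑ B : Fin D,
        (1/2 * S A B * φ x A * (fderiv ℝ (fun y => φ y B) x) (Pi.single μ 1)
          + 1/2 * S A B * φ x B * (fderiv ℝ (fun y => φ y A) x) (Pi.single μ 1))
      = (∑ A : Fin D, ∑ B : Fin D, 1/2 * S A B * φ x A * (fderiv ℝ (fun y => φ y B) x) (Pi.single μ 1))
        + ∑ A : Fin D, ∑ B : Fin D, 1/2 * S A B * φ x B * (fderiv ℝ (fun y => φ y A) x) (Pi.single μ 1) := by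
        rw [← Finset.sum_add_distrib]
        exact Finset.sum_congr rfl fun A _ => Finset.sum_add_distrib
    _ = ∑ A : Fin D, ∑ B : Fin D, S A B * φ x A * pd μ (fun y => φ y B) x := by
        rw [Finset.sum_comm (f := fun A B => 1/2 * S A B * φ x B * (fderiv ℝ (fun y => φ y A) x) (Pi.single μ 1))]
        rw [← Finset.sum_add_distrib]
        refine Finset.sum_congr rfl fun A _ => ?_
        rw [← Finset.sum_add_distrib]
        refine Finset.sum_congr rfl fun B _ => ?_
        rw [hsymm A B]
        simp only [pd]
        ring
def Tlin {D : ℕ} (K : Matrix (Fin D) (Fin D) ℝ) (R : Fin 3 → Matrix (Fin D) (Fin D) ℝ) :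
    (Fin 4 → Fin D → ℝ) →ₗ[ℝ] (Fin 4 → Fin D → ℝ) where
  toFun u := fun μ => -(K.mulVec (u μ)) -
    (if μ = 0 then (1 : ℝ) else 0) • ∑ j : Fin 3, (R j).mulVec (u j.succ)
  map_add' u v := by
    funext μ
    simp only [Pi.add_apply, Matrix.mulVec_add, Finset.sum_add_distrib, smul_add]
    abel
  map_smul' c u := by
    funext μ
    simp only [Pi.smul_apply, Matrix.mulVec_smul, RingHom.id_apply, ← Finset.smul_sum]
    rw [smul_comm]
    module

example {D : ℕ} (K : Matrix (Fin D) (Fin D) ℝ) (R : Fin 3 → Matrix (Fin D) (Fin D) ℝ)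
    (U : Fin 4 → Fin D → ℝ) (j : Fin 3) (B : Fin D) :
    Tlin K R U j.succ B = -(K.mulVec (U j.succ) B) := by
  simp [Tlin, Fin.succ_ne_zero]

example {D : ℕ} (K : Matrix (Fin D) (Fin D) ℝ) (R : Fin 3 → Matrix (Fin D) (Fin D) ℝ)
    (U : Fin 4 → Fin D → ℝ) (B : Fin D) :
    Tlin K R U 0 B = -(K.mulVec (U 0) B) - ∑ j : Fin 3, (R j).mulVec (U j.succ) B := by
  simp [Tlin]

lemma exists_sol {D : ℕ} (M : Fin 4 → Matrix (Fin D) (Fin D) ℝ)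
    (Ξ : Matrix (Fin D) (Fin D) ℝ) (hM0 : IsUnit (M 0))
    (v : Fin D → ℝ) (w : Fin 3 → Fin D → ℝ) :
    ∃ ψ : (Fin 4 → ℝ) → Fin D → ℝ, ContDiff ℝ (⊤ : ℕ∞) ψ ∧
      (∀ (x : Fin 4 → ℝ) (A : Fin D),
        ∑ μ : Fin 4, ∑ B : Fin D, M μ A B * pd μ (fun y => ψ y B) x =
          -∑ B : Fin D, Ξ A B * ψ x B) ∧
      ψ 0 = v ∧
      (∀ (j : Fin 3) (B : Fin D), pd j.succ (fun y => ψ y B) 0 = w j B) ∧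
      (∀ B : Fin D, pd 0 (fun y => ψ y B) 0 =
        -((((M 0)⁻¹ * Ξ).mulVec v) B) - ∑ j : Fin 3, (((M 0)⁻¹ * M j.succ).mulVec (w j)) B) := by
  classical
  set K : Matrix (Fin D) (Fin D) ℝ := (M 0)⁻¹ * Ξ with hK
  set R : Fin 3 → Matrix (Fin D) (Fin D) ℝ := fun j => (M 0)⁻¹ * M j.succ with hR
  have hdet : IsUnit (M 0).det := (Matrix.isUnit_iff_isUnit_det _).mp hM0
  have hMinv : M 0 * (M 0)⁻¹ = 1 := Matrix.mul_nonsing_inv _ hdet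
  have hM0K : M 0 * K = Ξ := by rw [hK, ← Matrix.mul_assoc, hMinv, Matrix.one_mul]
  have hM0R : ∀ j, M 0 * R j = M j.succ := fun j => by
    rw [hR, ← Matrix.mul_assoc, hMinv, Matrix.one_mul]
  set Tc : (Fin 4 → Fin D → ℝ) →L[ℝ] (Fin 4 → Fin D → ℝ) :=
    LinearMap.toContinuousLinearMap (Tlin K R) with hTc
  set u₀ : Fin 4 → Fin D → ℝ := Fin.cons v w with hu₀
  set u : ℝ → (Fin 4 → Fin D → ℝ) := fun t => NormedSpace.exp (t • Tc) u₀ with hu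
  -- component Tc lemmas
  have hTc0 : ∀ (U : Fin 4 → Fin D → ℝ) (B : Fin D),
      Tc U 0 B = -(K.mulVec (U 0) B) - ∑ j : Fin 3, (R j).mulVec (U j.succ) B := by
    intro U B; simp [hTc, Tlin]
  have hTcs : ∀ (U : Fin 4 → Fin D → ℝ) (j : Fin 3) (B : Fin D),
      Tc U j.succ B = -(K.mulVec (U j.succ) B) := by
    intro U j B; simp [hTc, Tlin, Fin.succ_ne_zero]
  -- derivative of u
  have hu' : ∀ t, HasDerivAt u (Tc (u t)) t := by
    intro t
    have h := hasDerivAt_exp_smul_const' (𝕂 := ℝ) Tc t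
    have := (ContinuousLinearMap.apply ℝ (Fin 4 → Fin D → ℝ) u₀).hasFDerivAt.comp_hasDerivAt t h
    exact this
  have husm : ContDiff ℝ (⊤ : ℕ∞) u := by
    have hexp : ContDiff ℝ (⊤ : ℕ∞) (fun t : ℝ => NormedSpace.exp (t • Tc)) := by
      rw [contDiff_iff_contDiffAt]
      intro t
      exact (NormedSpace.exp_analytic (𝕂 := ℝ) _).contDiffAt.comp t
        ((contDiff_id.smul contDiff_const).contDiffAt)
    exact (ContinuousLinearMap.apply ℝ (Fin 4 → Fin D → ℝ) u₀).contDiff.comp hexp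
  have hu0 : u 0 = u₀ := by simp [hu]
  -- the solution
  set ψ : (Fin 4 → ℝ) → Fin D → ℝ :=
    fun x A => u (x 0) 0 A + ∑ j : Fin 3, x j.succ * u (x 0) j.succ A with hψ
  -- smooth components of u
  have hcomp : ∀ (ν : Fin 4) (A : Fin D), ContDiff ℝ (⊤ : ℕ∞) (fun x : Fin 4 → ℝ => u (x 0) ν A) := by
    intro ν A
    exact (ContinuousLinearMap.proj A).contDiff.comp
      ((ContinuousLinearMap.proj ν).contDiff.comp
        (husm.comp (ContinuousLinearMap.proj (R := ℝ) (φ := fun _ : Fin 4 => ℝ) 0).contDiff))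
  have hψsm : ContDiff ℝ (⊤ : ℕ∞) ψ := by
    rw [contDiff_pi]
    intro A
    exact (hcomp 0 A).add (ContDiff.sum fun j _ =>
      ((ContinuousLinearMap.proj (R := ℝ) (φ := fun _ : Fin 4 => ℝ) j.succ).contDiff).mul
        (hcomp j.succ A))
  -- derivative of u components
  have hg : ∀ (ν : Fin 4) (B : Fin D) (t : ℝ),
      HasDerivAt (fun s => u s ν B) (Tc (u t) ν B) t := by
    intro ν B t
    have := (((ContinuousLinearMap.proj (R := ℝ) (φ := fun _ : Fin D => ℝ) B).comp
      (ContinuousLinearMap.proj (R := ℝ) (φ := fun _ : Fin 4 => Fin D → ℝ) ν)).hasFDerivAt).comp_hasDerivAt t (hu' t)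
    exact this
  -- full space derivative of ψ components
  set pr : Fin 4 → ((Fin 4 → ℝ) →L[ℝ] ℝ) :=
    fun ν => ContinuousLinearMap.proj ν with hpr
  have hFD : ∀ (x : Fin 4 → ℝ) (B : Fin D),
      HasFDerivAt (fun y : Fin 4 → ℝ => ψ y B)
        ((Tc (u (x 0)) 0 B) • pr 0 +
          ∑ j : Fin 3,
            ((x j.succ) • ((Tc (u (x 0)) j.succ B) • pr 0) +
              (u (x 0) j.succ B) • pr j.succ)) x := by
    intro x B
    have h1 : HasFDerivAt (fun y : Fin 4 → ℝ => u (y 0) 0 B)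
        ((Tc (u (x 0)) 0 B) • pr 0) x :=
      (hg 0 B ((pr 0) x)).comp_hasFDerivAt x (pr 0).hasFDerivAt
    refine HasFDerivAt.add h1 (HasFDerivAt.fun_sum fun j _ => ?_)
    have h2 : HasFDerivAt (fun y : Fin 4 → ℝ => u (y 0) j.succ B)
        ((Tc (u (x 0)) j.succ B) • pr 0) x :=
      (hg j.succ B ((pr 0) x)).comp_hasFDerivAt x (pr 0).hasFDerivAt
    exact (pr j.succ).hasFDerivAt.mul h2
  -- pd values
  have hpd0 : ∀ (x : Fin 4 → ℝ) (B : Fin D),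
      pd 0 (fun y => ψ y B) x =
        Tc (u (x 0)) 0 B + ∑ j : Fin 3, x j.succ * Tc (u (x 0)) j.succ B := by
    intro x B
    rw [pd, (hFD x B).fderiv]
    simp [hpr, Pi.single_apply, Fin.succ_ne_zero]
  have hpdj : ∀ (x : Fin 4 → ℝ) (k : Fin 3) (B : Fin D),
      pd k.succ (fun y => ψ y B) x = u (x 0) k.succ B := by
    intro x k B
    rw [pd, (hFD x B).fderiv]
    simp [hpr, Pi.single_apply, Fin.succ_ne_zero, Fin.succ_inj]
  -- scalar algebra helpers
  have e1 : ∀ (z : Fin D → ℝ) (A : Fin D),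
      ∑ B : Fin D, M 0 A B * K.mulVec z B = Ξ.mulVec z A := by
    intro z A
    have h : ∑ B : Fin D, M 0 A B * K.mulVec z B = (M 0).mulVec (K.mulVec z) A := rfl
    rw [h, Matrix.mulVec_mulVec, hM0K]
  have e2 : ∀ (j : Fin 3) (z : Fin D → ℝ) (A : Fin D),
      ∑ B : Fin D, M 0 A B * (R j).mulVec z B = (M j.succ).mulVec z A := by
    intro j z A
    have h : ∑ B : Fin D, M 0 A B * (R j).mulVec z B = (M 0).mulVec ((R j).mulVec z) A := rfl
    rw [h, Matrix.mulVec_mulVec, hM0R]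
  have hsplit : ∀ (x : Fin 4 → ℝ) (A : Fin D) (P : Matrix (Fin D) (Fin D) ℝ)
      (g : Fin 4 → Fin D → ℝ),
      ∑ B : Fin D, P A B * (g 0 B + ∑ j : Fin 3, x j.succ * g j.succ B)
        = P.mulVec (g 0) A + ∑ j : Fin 3, x j.succ * P.mulVec (g j.succ) A := by
    intro x A P g
    simp only [mul_add, Finset.sum_add_distrib]
    congr 1
    rw [show (∑ B : Fin D, P A B * ∑ j : Fin 3, x j.succ * g j.succ B)
        = ∑ j : Fin 3, ∑ B : Fin D, P A B * (x j.succ * g j.succ B) by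
      rw [Finset.sum_comm]
      exact Finset.sum_congr rfl fun B _ => Finset.mul_sum _ _ _]
    refine Finset.sum_congr rfl fun j _ => ?_
    simp only [Matrix.mulVec, dotProduct, Finset.mul_sum]
    exact Finset.sum_congr rfl fun B _ => by ring
  refine ⟨ψ, hψsm, ?_, ?_, ?_, ?_⟩
  · -- solves the M-system
    intro x A
    rw [Fin.sum_univ_succ]
    simp only [hpd0, hpdj]
    have s2 : ∀ j : Fin 3, ∑ B : Fin D, M 0 A B * Tc (u (x 0)) j.succ B
        = -(Ξ.mulVec (u (x 0) j.succ) A) := by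
      intro j
      simp only [hTcs, mul_neg]
      rw [Finset.sum_neg_distrib, e1]
    have s1 : ∑ B : Fin D, M 0 A B * Tc (u (x 0)) 0 B
        = -(Ξ.mulVec (u (x 0) 0) A) - ∑ j : Fin 3, (M j.succ).mulVec (u (x 0) j.succ) A := by
      simp only [hTc0, mul_sub, mul_neg]
      rw [Finset.sum_sub_distrib, Finset.sum_neg_distrib, e1]
      congr 1
      rw [show ∑ B : Fin D, M 0 A B * ∑ j : Fin 3, (R j *ᵥ u (x 0) j.succ) B
          = ∑ j : Fin 3, ∑ B : Fin D, M 0 A B * (R j *ᵥ u (x 0) j.succ) B by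
        rw [Finset.sum_comm]
        exact Finset.sum_congr rfl fun B _ => Finset.mul_sum _ _ _]
      exact Finset.sum_congr rfl fun j _ => e2 j _ A
    rw [hsplit x A (M 0) (Tc (u (x 0)))]
    -- rewrite mulVec components back to sums matched by s1 s2
    have hmv : ∀ (P : Matrix (Fin D) (Fin D) ℝ) (z : Fin D → ℝ),
        P.mulVec z A = ∑ B : Fin D, P A B * z B := fun P z => rfl
    rw [hmv (M 0) (Tc (u (x 0)) 0), s1]
    have : ∀ j : Fin 3, x j.succ * (M 0).mulVec (Tc (u (x 0)) j.succ) A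
        = x j.succ * -(Ξ.mulVec (u (x 0) j.succ) A) := by
      intro j; rw [hmv (M 0) (Tc (u (x 0)) j.succ), s2]
    rw [Finset.sum_congr rfl fun j _ => this j]
    have hj2 : ∀ j : Fin 3, ∑ B : Fin D, M j.succ A B * u (x 0) j.succ B
        = (M j.succ).mulVec (u (x 0) j.succ) A := fun j => rfl
    rw [Finset.sum_congr rfl fun j _ => hj2 j]
    have hR2 : -∑ B : Fin D, Ξ A B * ψ x B
        = -(Ξ.mulVec (u (x 0) 0) A + ∑ j : Fin 3, x j.succ * Ξ.mulVec (u (x 0) j.succ) A) := by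
      rw [show (∑ B : Fin D, Ξ A B * ψ x B)
          = ∑ B : Fin D, Ξ A B * (u (x 0) 0 B + ∑ j : Fin 3, x j.succ * u (x 0) j.succ B) from rfl]
      rw [hsplit x A Ξ (u (x 0))]
    rw [hR2]
    simp only [mul_neg, Finset.sum_neg_distrib]
    ring
  · -- value at 0
    funext A
    show u ((0 : Fin 4 → ℝ) 0) 0 A + ∑ j : Fin 3, (0 : Fin 4 → ℝ) j.succ * u ((0 : Fin 4 → ℝ) 0) j.succ A = v A
    simp [hu0, hu₀]
  · -- spatial derivatives at 0
    intro j B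
    rw [hpdj]
    show u ((0 : Fin 4 → ℝ) 0) j.succ B = w j B
    simp [hu0, hu₀]
  · -- time derivative at 0
    intro B
    rw [hpd0]
    have h0 : ((0 : Fin 4 → ℝ) 0) = (0 : ℝ) := rfl
    rw [h0, hu0]
    simp only [Pi.zero_apply, zero_mul, Finset.sum_const_zero, add_zero]
    rw [hTc0]
    have hc0 : u₀ 0 = v := Fin.cons_zero _ _
    have hcs : ∀ j : Fin 3, u₀ j.succ = w j := fun j => Fin.cons_succ _ _ _
    rw [hc0]
    simp only [hcs]
    rfl

/-- Theorem 1 of the paper: under the existence of a future-directed timelike information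
current, every smooth solution of `M^μ∂_μφ = -Ξφ` also satisfies the symmetric hyperbolic
system `E^μ∂_μφ = -σφ - Ξ'_{[AB]}φ` with `Ξ' = E⁰(M⁰)⁻¹Ξ`; the matrices `E^μ` are
symmetric and `E⁰` is positive definite. -/
theorem stmt3 {D : ℕ} (M : Fin 4 → Matrix (Fin D) (Fin D) ℝ)
    (Ξ : Matrix (Fin D) (Fin D) ℝ)
    (E : Fin 4 → Matrix (Fin D) (Fin D) ℝ) (σ : Matrix (Fin D) (Fin D) ℝ)
    (hM0 : IsUnit (M 0))
    (hEsym : ∀ μ, (E μ).IsSymm) (hσsym : σ.IsSymm)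
    (hlaw : ∀ φ : (Fin 4 → ℝ) → Fin D → ℝ, ContDiff ℝ (⊤ : ℕ∞) φ →
      (∀ (x : Fin 4 → ℝ) (A : Fin D),
        ∑ μ : Fin 4, ∑ B : Fin D, M μ A B * pd μ (fun y => φ y B) x =
          -∑ B : Fin D, Ξ A B * φ x B) →
      ∀ x : Fin 4 → ℝ,
        ∑ μ : Fin 4, pd μ (fun y => (1 / 2 : ℝ) * quadM (E μ) (φ y)) x =
          -quadM σ (φ x))
    (htl : ∀ Z : Fin D → ℝ, Z ≠ 0 →
      0 < quadM (E 0) Z ∧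
      (∑ j : Fin 3, (quadM (E j.succ) Z) ^ 2) < (quadM (E 0) Z) ^ 2) :
    (∀ φ : (Fin 4 → ℝ) → Fin D → ℝ, ContDiff ℝ (⊤ : ℕ∞) φ →
      (∀ (x : Fin 4 → ℝ) (A : Fin D),
        ∑ μ : Fin 4, ∑ B : Fin D, M μ A B * pd μ (fun y => φ y B) x =
          -∑ B : Fin D, Ξ A B * φ x B) →
      ∀ (x : Fin 4 → ℝ) (A : Fin D),
        ∑ μ : Fin 4, ∑ B : Fin D, E μ A B * pd μ (fun y => φ y B) x =
          -∑ B : Fin D, σ A B * φ x B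
            - ∑ B : Fin D,
                ((1 / 2 : ℝ) • (E 0 * (M 0)⁻¹ * Ξ - (E 0 * (M 0)⁻¹ * Ξ)ᵀ)) A B * φ x B) ∧
    (∀ μ, (E μ).IsSymm) ∧ (E 0).PosDef := by
  classical
  have hdet : IsUnit (M 0).det := (Matrix.isUnit_iff_isUnit_det _).mp hM0
  have hMinv' : (M 0)⁻¹ * M 0 = 1 := Matrix.nonsing_inv_mul _ hdet
  -- the key scalar identity coming from the conservation law along constructed solutions
  have claim : ∀ (v : Fin D → ℝ) (w : Fin 3 → Fin D → ℝ),
      ∑ j : Fin 3, v ⬝ᵥ (E j.succ - E 0 * (M 0)⁻¹ * M j.succ).mulVec (w j)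
        = v ⬝ᵥ (E 0 * (M 0)⁻¹ * Ξ - σ).mulVec v := by
    intro v w
    obtain ⟨ψ, hsm, hslv, hψ0, hpdj0, hpd00⟩ := exists_sol M Ξ hM0 v w
    have hq := hlaw ψ hsm hslv 0
    rw [Fin.sum_univ_succ] at hq
    simp only [pd_quad (hEsym _) ψ hsm] at hq
    rw [hψ0] at hq
    simp only [hpd00, hpdj0] at hq
    -- massage the time term
    have hz : (fun B => -(((M 0)⁻¹ * Ξ) *ᵥ v) B - ∑ j : Fin 3, (((M 0)⁻¹ * M j.succ) *ᵥ w j) B)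
        = (-(((M 0)⁻¹ * Ξ) *ᵥ v) - ∑ j : Fin 3, ((M 0)⁻¹ * M j.succ) *ᵥ w j) := by
      funext B; simp
    have h1 : ∑ A : Fin D, ∑ B : Fin D, E 0 A B * v A *
          (-(((M 0)⁻¹ * Ξ) *ᵥ v) B - ∑ j : Fin 3, (((M 0)⁻¹ * M j.succ) *ᵥ w j) B)
        = -(v ⬝ᵥ (E 0 * (M 0)⁻¹ * Ξ) *ᵥ v)
          - ∑ j : Fin 3, v ⬝ᵥ (E 0 * (M 0)⁻¹ * M j.succ) *ᵥ w j := by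
      rw [show (∑ A : Fin D, ∑ B : Fin D, E 0 A B * v A *
          (-(((M 0)⁻¹ * Ξ) *ᵥ v) B - ∑ j : Fin 3, (((M 0)⁻¹ * M j.succ) *ᵥ w j) B))
        = v ⬝ᵥ (E 0) *ᵥ (-(((M 0)⁻¹ * Ξ) *ᵥ v) - ∑ j : Fin 3, ((M 0)⁻¹ * M j.succ) *ᵥ w j) from by
          rw [← dot_double]; rw [← hz]]
      rw [Matrix.mulVec_sub, Matrix.mulVec_neg, dotProduct_sub, dotProduct_neg,
        Matrix.mulVec_mulVec, ← Matrix.mul_assoc]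
      congr 1
      rw [mulVec_sum', dot_sum]
      refine Finset.sum_congr rfl fun j _ => ?_
      rw [Matrix.mulVec_mulVec, ← Matrix.mul_assoc]
    rw [h1] at hq
    have h2 : ∀ j : Fin 3, (∑ A : Fin D, ∑ B : Fin D, E j.succ A B * v A * w j B)
        = v ⬝ᵥ (E j.succ) *ᵥ w j := fun j => dot_double _ _ _
    simp only [h2] at hq
    -- hq : -(v⬝ᵥΞ'v) - ∑ⱼ v⬝ᵥ(NMⱼ)wⱼ + ∑ⱼ v⬝ᵥEⱼwⱼ = -(v⬝ᵥσv)
    have hσ : quadM σ v = v ⬝ᵥ σ *ᵥ v := rfl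
    rw [hσ] at hq
    have expand : ∑ j : Fin 3, v ⬝ᵥ (E j.succ - E 0 * (M 0)⁻¹ * M j.succ).mulVec (w j)
        = (∑ j : Fin 3, v ⬝ᵥ (E j.succ) *ᵥ w j)
          - ∑ j : Fin 3, v ⬝ᵥ (E 0 * (M 0)⁻¹ * M j.succ) *ᵥ w j := by
      rw [← Finset.sum_sub_distrib]
      refine Finset.sum_congr rfl fun j _ => ?_
      rw [Matrix.sub_mulVec, dotProduct_sub]
    have expand2 : v ⬝ᵥ (E 0 * (M 0)⁻¹ * Ξ - σ).mulVec v
        = v ⬝ᵥ (E 0 * (M 0)⁻¹ * Ξ) *ᵥ v - v ⬝ᵥ σ *ᵥ v := by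
      rw [Matrix.sub_mulVec, dotProduct_sub]
    rw [expand, expand2]
    linarith [hq]
  -- extraction of the matrix identities
  have hQ0 : ∀ v : Fin D → ℝ, v ⬝ᵥ (E 0 * (M 0)⁻¹ * Ξ - σ).mulVec v = 0 := by
    intro v
    have := claim v 0
    simpa using this.symm
  have hanti := quad_anti hQ0
  have hCj : ∀ j : Fin 3, E j.succ = E 0 * (M 0)⁻¹ * M j.succ := by
    intro j
    have hz : ∀ v w' : Fin D → ℝ, v ⬝ᵥ (E j.succ - E 0 * (M 0)⁻¹ * M j.succ).mulVec w' = 0 := by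
      intro v w'
      have := claim v (Pi.single j w')
      rw [hQ0 v] at this
      rw [Finset.sum_eq_single j (fun k _ hk => by
          simp [Pi.single_eq_of_ne hk]) (fun h => absurd (Finset.mem_univ j) h)] at this
      simpa using this
    have := bilin_zero hz
    exact sub_eq_zero.mp this
  have hE0 : E 0 = E 0 * (M 0)⁻¹ * M 0 := by
    rw [Matrix.mul_assoc, hMinv', Matrix.mul_one]
  have hEμ : ∀ μ : Fin 4, E μ = E 0 * (M 0)⁻¹ * M μ := by
    intro μ
    refine Fin.cases ?_ ?_ μ
    · exact hE0
    · intro j; exact hCj j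
  -- the symmetric-part identity: σ A B relation
  have hσval : ∀ A B : Fin D, σ A B =
      (1/2 : ℝ) * ((E 0 * (M 0)⁻¹ * Ξ) A B + (E 0 * (M 0)⁻¹ * Ξ) B A) := by
    intro A B
    have h1 := hanti A B
    have hσs : σ B A = σ A B := (congrFun (congrFun hσsym B) A).symm
    simp only [Matrix.sub_apply] at h1
    rw [hσs] at h1
    linarith
  refine ⟨?_, hEsym, ?_⟩
  · -- the symmetric hyperbolic system
    intro φ hφ hsol x A
    set N : Matrix (Fin D) (Fin D) ℝ := E 0 * (M 0)⁻¹ with hN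
    have juggle : ∑ μ : Fin 4, ∑ B : Fin D, (N * M μ) A B * pd μ (fun y => φ y B) x
        = ∑ C : Fin D, N A C * ∑ μ : Fin 4, ∑ B : Fin D, M μ C B * pd μ (fun y => φ y B) x := by
      simp only [Matrix.mul_apply, Finset.sum_mul, Finset.mul_sum]
      calc ∑ μ : Fin 4, ∑ B : Fin D, ∑ C : Fin D, N A C * M μ C B * pd μ (fun y => φ y B) x
          = ∑ μ : Fin 4, ∑ C : Fin D, ∑ B : Fin D, N A C * M μ C B * pd μ (fun y => φ y B) x :=
            Finset.sum_congr rfl fun μ _ => Finset.sum_comm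
        _ = ∑ C : Fin D, ∑ μ : Fin 4, ∑ B : Fin D, N A C * M μ C B * pd μ (fun y => φ y B) x :=
            Finset.sum_comm
        _ = ∑ C : Fin D, ∑ μ : Fin 4, ∑ B : Fin D, N A C * (M μ C B * pd μ (fun y => φ y B) x) := by
            simp only [mul_assoc]
    calc ∑ μ : Fin 4, ∑ B : Fin D, E μ A B * pd μ (fun y => φ y B) x
        = ∑ μ : Fin 4, ∑ B : Fin D, (N * M μ) A B * pd μ (fun y => φ y B) x := by
          refine Finset.sum_congr rfl fun μ _ => Finset.sum_congr rfl fun B _ => ?_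
          rw [← hEμ μ]
      _ = ∑ C : Fin D, N A C * ∑ μ : Fin 4, ∑ B : Fin D, M μ C B * pd μ (fun y => φ y B) x :=
          juggle
      _ = ∑ C : Fin D, N A C * -∑ B : Fin D, Ξ C B * φ x B := by
          refine Finset.sum_congr rfl fun C _ => ?_
          rw [hsol x C]
      _ = -∑ B : Fin D, (N * Ξ) A B * φ x B := by
          simp only [mul_neg, Finset.mul_sum, Matrix.mul_apply, Finset.sum_mul,
            ← Finset.sum_neg_distrib]
          rw [Finset.sum_comm]
          refine Finset.sum_congr rfl fun C _ => Finset.sum_congr rfl fun B _ => by ring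
      _ = -∑ B : Fin D, σ A B * φ x B
            - ∑ B : Fin D,
              ((1 / 2 : ℝ) • (E 0 * (M 0)⁻¹ * Ξ - (E 0 * (M 0)⁻¹ * Ξ)ᵀ)) A B * φ x B := by
          have hpt : ∀ B : Fin D,
              σ A B * φ x B
                + ((1 / 2 : ℝ) • (E 0 * (M 0)⁻¹ * Ξ - (E 0 * (M 0)⁻¹ * Ξ)ᵀ)) A B * φ x B
              = (N * Ξ) A B * φ x B := by
            intro B
            simp only [Matrix.smul_apply, Matrix.sub_apply, Matrix.transpose_apply, smul_eq_mul]
            rw [hσval A B]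
            have : N * Ξ = E 0 * (M 0)⁻¹ * Ξ := by rw [hN, Matrix.mul_assoc]
            rw [this]
            ring
          rw [show (-∑ B : Fin D, σ A B * φ x B
              - ∑ B : Fin D,
                ((1 / 2 : ℝ) • (E 0 * (M 0)⁻¹ * Ξ - (E 0 * (M 0)⁻¹ * Ξ)ᵀ)) A B * φ x B)
              = -∑ B : Fin D, (σ A B * φ x B
                + ((1 / 2 : ℝ) • (E 0 * (M 0)⁻¹ * Ξ - (E 0 * (M 0)⁻¹ * Ξ)ᵀ)) A B * φ x B) by
            rw [Finset.sum_add_distrib]; ring]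
          rw [Finset.sum_congr rfl fun B _ => hpt B]
  · -- positive definiteness of E 0
    constructor
    · ext i j
      simp only [Matrix.conjTranspose_apply, RCLike.star_def, starRingEnd_apply, star_trivial]
      exact (congrFun (congrFun (hEsym 0) i) j)
    · intro z hz
      refine (Matrix.posDef_iff_dotProduct_mulVec.mpr ⟨?_, fun z hz => ?_⟩).2 hz
      · ext i j
        simp only [Matrix.conjTranspose_apply, RCLike.star_def, starRingEnd_apply, star_trivial]
        exact (congrFun (congrFun (hEsym 0) i) j)
      · have := (htl z hz).1
        simpa [quadM] using this
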